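/- Let L = sl₂(F) over a field F of characteristic zero with standard basis x, h, y satisfying [h,x] = 2x, [h,y] = −2y, [x,y] = h. Then for every α ∈ F the element r = α(h⊗x − x⊗h) + (1/4)h⊗h + x⊗y is a non skew-symmetric solution of the classical Yang–Baxter equation on L, and r + τ(r) is L-invariant. -/

import Mathlib

open TensorProduct

/-- The classical Yang–Baxter equation for `r = ∑ i, a i ⊗ b i`. -/
def CYBE {F L : Type*} [Field F] [AddCommGroup L] [Module F L]
    (mul : L →ₗ[F] L →ₗ[F] L) {n : ℕ} (a b : Fin n → L) : Prop :=
  ∑ i : Fin n, ∑ j : Fin n,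
      (mul (a i) (a j) ⊗ₜ[F] (b i ⊗ₜ[F] b j)
        - a i ⊗ₜ[F] (mul (a j) (b i) ⊗ₜ[F] b j)
        + a i ⊗ₜ[F] (a j ⊗ₜ[F] mul (b i) (b j))) = 0

/-- The Lie bracket of a Lie algebra as a bilinear map. -/
def brkt (F L : Type*) [Field F] [LieRing L] [LieAlgebra F L] : L →ₗ[F] L →ₗ[F] L :=
  LinearMap.mk₂ F (fun u v => ⁅u, v⁆) add_lie smul_lie lie_add lie_smul

/-!
The α-terms of `r` cancel in `r + τ(r)`, which is the Casimir element `½ h⊗h + x⊗y + y⊗x`.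
Since the action `u ⊗ v ↦ ⁅u, c⁆ ⊗ v + u ⊗ ⁅v, c⁆` is linear in `c`, invariance of the Casimir element only has
to be checked on the basis `x, h, y`. The Yang–Baxter equation is a direct expansion using the
`sl₂` relations, and `r` is not skew-symmetric because `x ⊗ y` occurs in `r` but not in `τ(r)`.
-/

section Sl2

variable {F L : Type*} [Field F] [LieRing L] [LieAlgebra F L] {x h y : L}

variable (F L) in
def tensorBracket : L →ₗ[F] Module.End F (L ⊗[F] L) :=
  (LinearMap.rTensorHom L + LinearMap.lTensorHom L) ∘ₗ (brkt F L).flip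

@[simp]
theorem tensorBracket_tmul (c u v : L) :
    tensorBracket F L c (u ⊗ₜ v) = ⁅u, c⁆ ⊗ₜ v + u ⊗ₜ ⁅v, c⁆ := by
  simp [tensorBracket, brkt]

theorem tensorBracket_sum_tmul_add_tmul {n : ℕ} (a b : Fin n → L) (c : L) :
    tensorBracket F L c (∑ i, (a i ⊗ₜ[F] b i + b i ⊗ₜ[F] a i)) =
      ∑ i, (⁅a i, c⁆ ⊗ₜ[F] b i + a i ⊗ₜ[F] ⁅b i, c⁆
        + ⁅b i, c⁆ ⊗ₜ[F] a i + b i ⊗ₜ[F] ⁅a i, c⁆) := by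
  simp [map_sum, add_assoc]

variable (F) in
def casimir (x h y : L) : L ⊗[F] L := (2⁻¹ : F) • h ⊗ₜ h + x ⊗ₜ y + y ⊗ₜ x

theorem sum_tmul_add_flip_sl2 (h2 : (2 : F) ≠ 0) (α : F) :
    ∑ i, (![α • h, α • x, (4⁻¹ : F) • h, x] i ⊗ₜ[F] ![x, -h, h, y] i
      + ![x, -h, h, y] i ⊗ₜ[F] ![α • h, α • x, (4⁻¹ : F) • h, x] i) = casimir F x h y := by
  have h4 : (4 : F) ≠ 0 := by rw [show (4 : F) = 2 * 2 by norm_num]; exact mul_ne_zero h2 h2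
  simp only [casimir, Fin.sum_univ_four, Matrix.cons_val_zero, Matrix.cons_val_one,
    Matrix.head_cons, Matrix.cons_val_two, Matrix.tail_cons, Matrix.cons_val_three,
    ← smul_tmul', tmul_smul, neg_tmul, tmul_neg]
  match_scalars <;> field_simp <;> ring

theorem sum_flip_ne_neg_sl2 (bb : Module.Basis (Fin 3) F L)
    (hb0 : bb 0 = x) (hb1 : bb 1 = h) (hb2 : bb 2 = y) (α : F) :
    ∑ i, ![x, -h, h, y] i ⊗ₜ[F] ![α • h, α • x, (4⁻¹ : F) • h, x] i ≠
      -∑ i, ![α • h, α • x, (4⁻¹ : F) • h, x] i ⊗ₜ[F] ![x, -h, h, y] i := by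
  intro heq
  -- the coefficients of `x ⊗ y` are `0` on the left and `-1` on the right
  have := congrArg (fun t => (bb.tensorProduct bb).repr t (0, 2)) heq
  subst hb0 hb1 hb2
  simp [Fin.sum_univ_four, ← smul_tmul', tmul_smul] at this

variable (hhx : ⁅h, x⁆ = (2 : F) • x) (hhy : ⁅h, y⁆ = (-2 : F) • y) (hxy : ⁅x, y⁆ = h)
include hhx hhy hxy

theorem cybe_sl2 (h2 : (2 : F) ≠ 0) (α : F) :
    CYBE (brkt F L) ![α • h, α • x, (4⁻¹ : F) • h, x] ![x, -h, h, y] := by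
  have hxh : ⁅x, h⁆ = (-2 : F) • x := by rw [← lie_skew, hhx]; module
  have hyh : ⁅y, h⁆ = (2 : F) • y := by rw [← lie_skew, hhy]; module
  have hyx : ⁅y, x⁆ = -h := by rw [← lie_skew, hxy]
  have h4 : (4 : F) ≠ 0 := by rw [show (4 : F) = 2 * 2 by norm_num]; exact mul_ne_zero h2 h2
  simp only [CYBE, brkt, Fin.sum_univ_four, Matrix.cons_val_zero, Matrix.cons_val_one,
    Matrix.head_cons, Matrix.cons_val_two, Matrix.tail_cons, Matrix.cons_val_three,
    LinearMap.mk₂_apply, smul_lie, lie_smul, lie_self, lie_neg, neg_lie,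
    hhx, hhy, hxy, hxh, hyh, hyx, ← smul_tmul', tmul_smul, neg_tmul, tmul_neg, zero_tmul,
    tmul_zero, smul_zero, smul_neg, smul_smul, neg_neg]
  match_scalars <;> field_simp <;> ring

theorem tensorBracket_casimir (h2 : (2 : F) ≠ 0) (bb : Module.Basis (Fin 3) F L)
    (hb0 : bb 0 = x) (hb1 : bb 1 = h) (hb2 : bb 2 = y) (c : L) :
    tensorBracket F L c (casimir F x h y) = 0 := by
  have hxh : ⁅x, h⁆ = (-2 : F) • x := by rw [← lie_skew, hhx]; module
  have hyh : ⁅y, h⁆ = (2 : F) • y := by rw [← lie_skew, hhy]; module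
  have hyx : ⁅y, x⁆ = -h := by rw [← lie_skew, hxy]
  suffices (tensorBracket F L).flip (casimir F x h y) = 0 from LinearMap.congr_fun this c
  refine bb.ext fun i => ?_
  fin_cases i <;>
    simp only [casimir, map_add, map_smul, LinearMap.add_apply, LinearMap.smul_apply,
      LinearMap.flip_apply, tensorBracket_tmul, Fin.zero_eta, Fin.mk_one, Fin.reduceFinMk,
      hb0, hb1, hb2, lie_self, hhx, hhy, hxy, hxh, hyh, hyx, ← smul_tmul', tmul_smul, neg_tmul,
      tmul_neg, zero_tmul, tmul_zero, LinearMap.zero_apply] <;>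
    match_scalars <;> field_simp <;> ring

end Sl2

theorem stmt12 {F L : Type*} [Field F] [CharZero F] [LieRing L] [LieAlgebra F L]
    -- `L = sl₂(F)` with standard basis `x, h, y`
    (bb : Module.Basis (Fin 3) F L) (x h y : L)
    (hb0 : bb 0 = x) (hb1 : bb 1 = h) (hb2 : bb 2 = y)
    (hhx : ⁅h, x⁆ = (2 : F) • x) (hhy : ⁅h, y⁆ = (-2 : F) • y) (hxy : ⁅x, y⁆ = h)
    (α : F)
    -- `r = α(h⊗x - x⊗h) + (1/4)h⊗h + x⊗y`, written as `∑ i, a i ⊗ b i`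
    (a b : Fin 4 → L)
    (ha : a = ![α • h, α • x, (4⁻¹ : F) • h, x])
    (hb : b = ![x, -h, h, y]) :
    CYBE (brkt F L) a b ∧
    (∑ i, b i ⊗ₜ[F] a i ≠ -∑ i, a i ⊗ₜ[F] b i) ∧
    (∀ c : L, ∑ i, (⁅a i, c⁆ ⊗ₜ[F] b i + a i ⊗ₜ[F] ⁅b i, c⁆
        + ⁅b i, c⁆ ⊗ₜ[F] a i + b i ⊗ₜ[F] ⁅a i, c⁆) = 0) := by
  subst ha hb
  have h2 : (2 : F) ≠ 0 := two_ne_zero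
  refine ⟨cybe_sl2 hhx hhy hxy h2 α, sum_flip_ne_neg_sl2 bb hb0 hb1 hb2 α, fun c => ?_⟩
  rw [← tensorBracket_sum_tmul_add_tmul, sum_tmul_add_flip_sl2 h2 α]
  exact tensorBracket_casimir hhx hhy hxy h2 bb hb0 hb1 hb2 c
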